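/- arXiv:0806.0442 — 6 statements merged into one kernel-verified Lean document; each statement's English description precedes it below -/
import Mathlib

section
/- Let A be an m×m real matrix, B an m×k matrix, D an m×d matrix, and suppose Rank[B, AB, …, A^{m−1}B, D, AD, …, A^{m−1}D] = m. Then for every t > 0 there exist α, β, γ > 0 such that for every unit vector l ∈ ℝ^m, the Lebesgue measure of the set {s ∈ [0,t] : ‖B* e^{sA*} l‖ > α or ‖D* e^{sA*} l‖ > β} is at least γ. -/
open MeasureTheory Matrix

noncomputable def eunorm {n : ℕ} (v : Fin n → ℝ) : ℝ := Real.sqrt (∑ i, v i ^ 2)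

/-- The block matrix `[B, AB, …, A^{m−1}B, D, AD, …, A^{m−1}D]`. -/
noncomputable def kalmanMatrix {m k d : ℕ} (A : Matrix (Fin m) (Fin m) ℝ)
    (B : Matrix (Fin m) (Fin k) ℝ) (D : Matrix (Fin m) (Fin d) ℝ) :
    Matrix (Fin m) (Fin m × (Fin k ⊕ Fin d)) ℝ :=
  Matrix.of fun i jc => match jc.2 with
    | Sum.inl b => ((A ^ (jc.1 : ℕ)) * B) i b
    | Sum.inr e => ((A ^ (jc.1 : ℕ)) * D) i e

/-!
If `Bᵀ e^{sAᵀ} l` and `Dᵀ e^{sAᵀ} l` both vanished on `(0, t)`, differentiating repeatedly and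
letting `s → 0` would give `Bᵀ (Aᵀ)ʲ l = Dᵀ (Aᵀ)ʲ l = 0` for all `j`, i.e. `l` would be orthogonal
to every column of the Kalman matrix, so `l = 0` by the rank condition. Hence for each unit
vector `l` the continuous function `s ↦ max ‖Bᵀ e^{sAᵀ} l‖ ‖Dᵀ e^{sAᵀ} l‖` exceeds some `ε > 0`
on an interval in `(0, t)`; by joint continuity the same `ε` and interval serve a whole
neighbourhood of `l`, and compactness of the unit sphere makes the bounds uniform.
-/

open Filter Topology Set ENNReal

theorem IsCompact.exists_forall_le_measure_setOf_lt {X Y : Type*} [TopologicalSpace X]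
    [TopologicalSpace Y] [MeasurableSpace Y] (μ : Measure Y) [μ.IsOpenPosMeasure] {K : Set X}
    (hK : IsCompact K) {g : X → Y → ℝ} (hg : Continuous (Function.uncurry g)) {T : Set Y}
    (hT : IsOpen T) (hpos : ∀ x ∈ K, ∃ y ∈ T, 0 < g x y) :
    ∃ ε > 0, ∃ γ : ℝ≥0∞, 0 < γ ∧ ∀ x ∈ K, γ ≤ μ {y | y ∈ T ∧ ε < g x y} := by
  refine hK.induction_on
    (p := fun K => ∃ ε > 0, ∃ γ : ℝ≥0∞, 0 < γ ∧ ∀ x ∈ K, γ ≤ μ {y | y ∈ T ∧ ε < g x y})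
    ⟨1, one_pos, 1, one_pos, by simp⟩ ?_ ?_ ?_
  · rintro K₁ K₂ hsub ⟨ε, hε, γ, hγ, h⟩
    exact ⟨ε, hε, γ, hγ, fun x hx => h x (hsub hx)⟩
  · rintro K₁ K₂ ⟨ε₁, hε₁, γ₁, hγ₁, h₁⟩ ⟨ε₂, hε₂, γ₂, hγ₂, h₂⟩
    have shrink : ∀ {ε ε' : ℝ} (x : X), ε' ≤ ε →
        μ {y | y ∈ T ∧ ε < g x y} ≤ μ {y | y ∈ T ∧ ε' < g x y} :=
      fun _ hε => measure_mono fun _ hy => ⟨hy.1, hε.trans_lt hy.2⟩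
    refine ⟨min ε₁ ε₂, lt_min hε₁ hε₂, min γ₁ γ₂, lt_min hγ₁ hγ₂, ?_⟩
    rintro x (hx | hx)
    · exact (min_le_left _ _).trans ((h₁ x hx).trans (shrink x (min_le_left _ _)))
    · exact (min_le_right _ _).trans ((h₂ x hx).trans (shrink x (min_le_right _ _)))
  · intro x hx
    obtain ⟨y₀, hy₀T, hy₀⟩ := hpos x hx
    have hnhds : {p : X × Y | g x y₀ / 2 < g p.1 p.2} ∈ 𝓝 (x, y₀) :=
      hg.continuousAt.preimage_mem_nhds (Ioi_mem_nhds (half_lt_self hy₀))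
    obtain ⟨U, V, hU, hxU, hV, hy₀V, hUV⟩ := mem_nhds_prod_iff'.mp hnhds
    exact ⟨U, mem_nhdsWithin_of_mem_nhds (hU.mem_nhds hxU), g x y₀ / 2, half_pos hy₀,
      μ (V ∩ T), (hV.inter hT).measure_pos μ ⟨y₀, hy₀V, hy₀T⟩,
      fun x' hx' => measure_mono fun y hy => ⟨hy.2, hUV (mk_mem_prod hx' hy.1)⟩⟩

lemma eunorm_eq_norm {n : ℕ} (v : Fin n → ℝ) : eunorm v = ‖WithLp.toLp 2 v‖ := by
  simp [eunorm, EuclideanSpace.norm_eq]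

lemma continuous_eunorm {n : ℕ} : Continuous (eunorm (n := n)) := by
  simp_rw [funext eunorm_eq_norm]
  exact (PiLp.continuous_toLp 2 _).norm

lemma eunorm_eq_zero {n : ℕ} {v : Fin n → ℝ} : eunorm v = 0 ↔ v = 0 := by
  simp [eunorm_eq_norm]

lemma isCompact_setOf_eunorm_eq_one {n : ℕ} : IsCompact {v : Fin n → ℝ | eunorm v = 1} := by
  convert (PiLp.homeomorph 2 _).symm.isCompact_preimage.mpr
    (isCompact_sphere (0 : EuclideanSpace ℝ (Fin n)) 1) using 1
  ext v
  simp only [mem_preimage, mem_sphere_zero_iff_norm, eunorm_eq_norm]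
  rfl

namespace Matrix

theorem eq_zero_of_vecMul_eq_zero_of_rank_eq {m n R : Type*} [Fintype m] [Fintype n] [Field R]
    {M : Matrix m n R} (hM : M.rank = Fintype.card m) {v : m → R} (hv : v ᵥ* M = 0) : v = 0 := by
  have hrows : LinearIndependent R M.row :=
    linearIndependent_iff_card_eq_finrank_span.mpr (hM.symm.trans M.rank_eq_finrank_span_row)
  rw [vecMul_eq_sum] at hv
  exact funext (Fintype.linearIndependent_iff.mp hrows v hv)

variable {n ι : Type*} [Fintype n] [DecidableEq n] [Fintype ι]

theorem hasDerivAt_exp_smul_const (M : Matrix n n ℝ) (s : ℝ) :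
    HasDerivAt (fun u : ℝ => NormedSpace.exp (u • M)) (NormedSpace.exp (s • M) * M) s := by
  -- any normed-algebra structure inducing the product topology will do
  let _ : NormedRing (Matrix n n ℝ) := Matrix.linftyOpNormedRing
  let _ : NormedAlgebra ℝ (Matrix n n ℝ) := Matrix.linftyOpNormedAlgebra
  exact _root_.hasDerivAt_exp_smul_const M s

theorem continuous_exp_smul_const (M : Matrix n n ℝ) :
    Continuous fun u : ℝ => NormedSpace.exp (u • M) := by
  let _ : NormedAddCommGroup (Matrix n n ℝ) := Matrix.linftyOpNormedAddCommGroup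
  let _ : NormedSpace ℝ (Matrix n n ℝ) := Matrix.linftyOpNormedSpace
  exact continuous_iff_continuousAt.2 fun s => (hasDerivAt_exp_smul_const M s).continuousAt

theorem hasDerivAt_mulVec_exp_smul_const_mulVec (N : Matrix ι n ℝ) (M : Matrix n n ℝ)
    (v : n → ℝ) (s : ℝ) :
    HasDerivAt (fun u : ℝ => N *ᵥ (NormedSpace.exp (u • M) *ᵥ v))
      (N *ᵥ (NormedSpace.exp (s • M) *ᵥ (M *ᵥ v))) s := by
  let _ : NormedAddCommGroup (Matrix n n ℝ) := Matrix.linftyOpNormedAddCommGroup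
  let _ : NormedSpace ℝ (Matrix n n ℝ) := Matrix.linftyOpNormedSpace
  let L : Matrix n n ℝ →L[ℝ] ι → ℝ :=
    (N.mulVecLin ∘ₗ LinearMap.applyₗ v ∘ₗ toLin'.toLinearMap).toContinuousLinearMap
  rw [mulVec_mulVec (M := NormedSpace.exp (s • M))]
  exact L.hasFDerivAt.comp_hasDerivAt s (hasDerivAt_exp_smul_const M s)

theorem mulVec_pow_mulVec_eq_zero_of_mulVec_exp_eq_zero (N : Matrix ι n ℝ) (M : Matrix n n ℝ)
    (v : n → ℝ) {t : ℝ} (ht : 0 < t)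
    (h : ∀ s ∈ Ioo 0 t, N *ᵥ (NormedSpace.exp (s • M) *ᵥ v) = 0) (j : ℕ) :
    N *ᵥ (M ^ j *ᵥ v) = 0 := by
  have hIoo : ∀ s ∈ Ioo 0 t, N *ᵥ (NormedSpace.exp (s • M) *ᵥ (M ^ j *ᵥ v)) = 0 := by
    induction j with
    | zero => simpa using h
    | succ j ih =>
      intro s hs
      have hconst : (fun u : ℝ => N *ᵥ (NormedSpace.exp (u • M) *ᵥ (M ^ j *ᵥ v))) =ᶠ[𝓝 s] 0 :=
        eventually_of_mem (isOpen_Ioo.mem_nhds hs) ih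
      have hderiv := (hasDerivAt_mulVec_exp_smul_const_mulVec N M (M ^ j *ᵥ v) s).unique
        ((hasDerivAt_const s 0).congr_of_eventuallyEq hconst)
      rwa [pow_succ', ← mulVec_mulVec]
  have hcont : Continuous fun u : ℝ => N *ᵥ (NormedSpace.exp (u • M) *ᵥ (M ^ j *ᵥ v)) :=
    continuous_iff_continuousAt.2 fun s =>
      (hasDerivAt_mulVec_exp_smul_const_mulVec N M _ s).continuousAt
  have hzero : (0 : ℝ) ∈ closure (Ioo 0 t) := by
    rw [closure_Ioo ht.ne]
    exact left_mem_Icc.mpr ht.le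
  simpa using (isClosed_eq hcont continuous_const).closure_subset_iff.mpr hIoo hzero

end Matrix

section Kalman

variable {m k d : ℕ} {A : Matrix (Fin m) (Fin m) ℝ} {B : Matrix (Fin m) (Fin k) ℝ}
  {D : Matrix (Fin m) (Fin d) ℝ} {l : Fin m → ℝ}

theorem vecMul_kalmanMatrix_eq_zero (hB : ∀ j : ℕ, Bᵀ *ᵥ (Aᵀ ^ j *ᵥ l) = 0)
    (hD : ∀ j : ℕ, Dᵀ *ᵥ (Aᵀ ^ j *ᵥ l) = 0) : l ᵥ* kalmanMatrix A B D = 0 := by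
  ext ⟨j, b | e⟩
  · change (l ᵥ* (A ^ (j : ℕ) * B)) b = 0
    rw [← mulVec_transpose, transpose_mul, ← mulVec_mulVec, transpose_pow, hB, Pi.zero_apply]
  · change (l ᵥ* (A ^ (j : ℕ) * D)) e = 0
    rw [← mulVec_transpose, transpose_mul, ← mulVec_mulVec, transpose_pow, hD, Pi.zero_apply]

theorem eq_zero_of_rank_kalmanMatrix_eq (hrank : (kalmanMatrix A B D).rank = m) {t : ℝ}
    (ht : 0 < t) (hB : ∀ s ∈ Ioo 0 t, Bᵀ *ᵥ (NormedSpace.exp (s • Aᵀ) *ᵥ l) = 0)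
    (hD : ∀ s ∈ Ioo 0 t, Dᵀ *ᵥ (NormedSpace.exp (s • Aᵀ) *ᵥ l) = 0) : l = 0 :=
  eq_zero_of_vecMul_eq_zero_of_rank_eq (by rw [hrank, Fintype.card_fin])
    (vecMul_kalmanMatrix_eq_zero (mulVec_pow_mulVec_eq_zero_of_mulVec_exp_eq_zero _ _ _ ht hB)
      (mulVec_pow_mulVec_eq_zero_of_mulVec_exp_eq_zero _ _ _ ht hD))

end Kalman

theorem kalman_lemma {m k d : ℕ} (A : Matrix (Fin m) (Fin m) ℝ)
    (B : Matrix (Fin m) (Fin k) ℝ) (D : Matrix (Fin m) (Fin d) ℝ)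
    (hrank : (kalmanMatrix A B D).rank = m) (t : ℝ) (ht : 0 < t) :
    ∃ α β γ : ℝ, 0 < α ∧ 0 < β ∧ 0 < γ ∧
      ∀ l : Fin m → ℝ, eunorm l = 1 →
        ENNReal.ofReal γ ≤ volume {s : ℝ | s ∈ Set.Icc 0 t ∧
          (α < eunorm (Bᵀ *ᵥ (NormedSpace.exp (s • Aᵀ) *ᵥ l)) ∨
           β < eunorm (Dᵀ *ᵥ (NormedSpace.exp (s • Aᵀ) *ᵥ l)))} := by
  have hexp : Continuous fun p : (Fin m → ℝ) × ℝ => NormedSpace.exp (p.2 • Aᵀ) *ᵥ p.1 :=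
    ((continuous_exp_smul_const Aᵀ).comp continuous_snd).matrix_mulVec continuous_fst
  have hcont : Continuous fun p : (Fin m → ℝ) × ℝ =>
      max (eunorm (Bᵀ *ᵥ (NormedSpace.exp (p.2 • Aᵀ) *ᵥ p.1)))
        (eunorm (Dᵀ *ᵥ (NormedSpace.exp (p.2 • Aᵀ) *ᵥ p.1))) :=
    (continuous_eunorm.comp (continuous_const.matrix_mulVec hexp)).max
      (continuous_eunorm.comp (continuous_const.matrix_mulVec hexp))
  have hpos : ∀ l ∈ {l : Fin m → ℝ | eunorm l = 1}, ∃ s ∈ Ioo 0 t,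
      0 < max (eunorm (Bᵀ *ᵥ (NormedSpace.exp (s • Aᵀ) *ᵥ l)))
        (eunorm (Dᵀ *ᵥ (NormedSpace.exp (s • Aᵀ) *ᵥ l))) := by
    intro l hl
    by_contra! hle
    have hl0 : l = 0 := eq_zero_of_rank_kalmanMatrix_eq hrank ht
      (fun s hs => eunorm_eq_zero.mp <|
        le_antisymm ((le_max_left _ _).trans (hle s hs)) (Real.sqrt_nonneg _))
      (fun s hs => eunorm_eq_zero.mp <|
        le_antisymm ((le_max_right _ _).trans (hle s hs)) (Real.sqrt_nonneg _))
    simp [hl0, eunorm] at hl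
  obtain ⟨ε, hε, γ, hγ, hbound⟩ :=
    isCompact_setOf_eunorm_eq_one.exists_forall_le_measure_setOf_lt volume hcont isOpen_Ioo hpos
  obtain ⟨γ', -, hγ'0, hγ'⟩ := ENNReal.lt_iff_exists_real_btwn.mp hγ
  refine ⟨ε, ε, γ', hε, hε, ENNReal.ofReal_pos.mp hγ'0, fun l hl =>
    hγ'.le.trans ((hbound l hl).trans (measure_mono ?_))⟩
  rintro s ⟨hs, hlt⟩
  exact ⟨Ioo_subset_Icc_self hs, lt_max_iff.mp hlt⟩
end

section
/- Let Π = Σ_{n≥1} n δ_{1/n!} on ℝ. Then ρ(ε) := [ε² ln(1/ε)]^{−1} ∫_ℝ (u² ∧ ε²) Π(du) → +∞ as ε → 0+. -/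
/-!
For `ε` in the block `[1/(K+1)!, 1/K!)` each of the first `K` atoms `1/(n+1)!` is at least `ε`,
so it contributes its full weight times `ε²`, and the truncated second moment is at least
`K(K+1)/2 · ε²`. On the other hand `log (1/ε) ≤ log (K+1)! ≤ (K+1) log (K+1)`, so on that block
`ρ ε ≥ K / (2 log (K+1)) ≥ (K+1) / (4 log (K+1))`, which tends to infinity with `K`.
-/

open MeasureTheory Filter Real
open scoped Nat

theorem tendsto_div_log_atTop : Tendsto (fun x : ℝ => x / log x) atTop atTop := by
  have hpos : ∀ᶠ x : ℝ in atTop, 0 < log x / x := by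
    filter_upwards [eventually_gt_atTop 1] with x hx
    exact div_pos (log_pos hx) (by linarith)
  have h := isLittleO_log_id_atTop.tendsto_div_nhds_zero
  refine (tendsto_inv_nhdsGT_zero.comp (tendsto_nhdsWithin_iff.2 ⟨h, hpos⟩)).congr fun x => ?_
  simp

theorem lintegral_ofReal_sum_nsmul_dirac {α : Type*} [MeasurableSpace α]
    [MeasurableSingletonClass α] (w : ℕ → ℕ) (x : ℕ → α) {g : α → ℝ} (hg : ∀ a, 0 ≤ g a)
    (hs : Summable fun n => (w n : ℝ) * g (x n)) :
    ∫⁻ a, ENNReal.ofReal (g a) ∂(Measure.sum fun n => w n • Measure.dirac (x n)) =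
      ENNReal.ofReal (∑' n, (w n : ℝ) * g (x n)) := by
  rw [ENNReal.ofReal_tsum_of_nonneg (fun n => mul_nonneg (Nat.cast_nonneg _) (hg _)) hs,
    lintegral_sum_measure]
  congr 1 with n
  rw [lintegral_smul_measure, lintegral_dirac, ENNReal.ofReal_mul (Nat.cast_nonneg _),
    ENNReal.ofReal_natCast, nsmul_eq_mul]

theorem sum_range_natCast_add_one (K : ℕ) :
    ∑ n ∈ Finset.range K, ((n : ℝ) + 1) = K * (K + 1) / 2 := by
  induction K with
  | zero => simp
  | succ k ih => rw [Finset.sum_range_succ, ih]; push_cast; ring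

theorem succ_mul_one_div_factorial_succ_sq_le (n : ℕ) :
    ((n : ℝ) + 1) * (1 / ((n + 1)! : ℝ)) ^ 2 ≤ 1 / n ! := by
  have h1 : (1 : ℝ) ≤ (n + 1)! := by exact_mod_cast (n + 1).factorial_pos
  calc ((n : ℝ) + 1) * (1 / ((n + 1)! : ℝ)) ^ 2 = 1 / n ! * (1 / (n + 1)!) := by
        push_cast [Nat.factorial_succ]; field_simp
    _ ≤ 1 / n ! := mul_le_of_le_one_right (by positivity) (div_le_one_of_le₀ h1 (by positivity))

theorem summable_succ_mul_min_one_div_factorial_succ_sq (ε : ℝ) :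
    Summable fun n : ℕ => ((n : ℝ) + 1) * min ((1 / ((n + 1)! : ℝ)) ^ 2) (ε ^ 2) := by
  refine Summable.of_nonneg_of_le (fun n => by positivity) (fun n => ?_)
    (by simpa only [one_pow] using Real.summable_pow_div_factorial 1)
  exact (mul_le_mul_of_nonneg_left (min_le_left _ _) (by positivity)).trans
    (succ_mul_one_div_factorial_succ_sq_le n)

theorem toReal_lintegral_min_sq_weighted_factorial (ε : ℝ) :
    (∫⁻ u, ENNReal.ofReal (min (u ^ 2) (ε ^ 2))
      ∂Measure.sum fun n : ℕ => (n + 1) • Measure.dirac ((1 : ℝ) / (n + 1).factorial)).toReal =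
      ∑' n : ℕ, ((n : ℝ) + 1) * min ((1 / ((n + 1)! : ℝ)) ^ 2) (ε ^ 2) := by
  have hs := summable_succ_mul_min_one_div_factorial_succ_sq ε
  rw [lintegral_ofReal_sum_nsmul_dirac (fun n => n + 1) (fun n => 1 / ((n + 1)! : ℝ))
    (g := fun u => min (u ^ 2) (ε ^ 2)) (fun u => by positivity) (by exact_mod_cast hs),
    ENNReal.toReal_ofReal (tsum_nonneg fun n => by positivity)]
  push_cast
  rfl

theorem mul_succ_div_two_mul_sq_le_tsum {ε : ℝ} {K : ℕ} (hε0 : 0 ≤ ε) (hε : ε ≤ 1 / K !) :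
    K * (K + 1) / 2 * ε ^ 2 ≤
      ∑' n : ℕ, ((n : ℝ) + 1) * min ((1 / ((n + 1)! : ℝ)) ^ 2) (ε ^ 2) := by
  rw [← sum_range_natCast_add_one, Finset.sum_mul]
  refine (Finset.sum_le_sum fun n hn => ?_).trans (Summable.sum_le_tsum _
    (fun n _ => by positivity) (summable_succ_mul_min_one_div_factorial_succ_sq ε))
  have hfac : ((n + 1)! : ℝ) ≤ K ! := by exact_mod_cast Nat.factorial_le (Finset.mem_range.1 hn)
  have hεn : ε ≤ 1 / (n + 1)! := hε.trans (one_div_le_one_div_of_le (by positivity) hfac)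
  gcongr
  exact le_min (pow_le_pow_left₀ hε0 hεn 2) le_rfl

theorem log_one_div_le_mul_log {ε : ℝ} {N : ℕ} (hε : 1 / (N ! : ℝ) ≤ ε) :
    log (1 / ε) ≤ N * log N := by
  have hε0 : 0 < ε := (by positivity : (0 : ℝ) < 1 / N !).trans_le hε
  calc log (1 / ε) ≤ log (N ! : ℝ) :=
        log_le_log (by positivity) ((one_div_le hε0 (by positivity : (0 : ℝ) < N !)).2 hε)
    _ ≤ log ((N : ℝ) ^ N) := log_le_log (by positivity) (by exact_mod_cast Nat.factorial_le_pow N)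
    _ = N * log N := log_pow N N

theorem succ_div_four_mul_log_le {ε : ℝ} {K : ℕ} (hK : 1 ≤ K) (hε₁ : 1 / ((K + 1)! : ℝ) ≤ ε)
    (hε₂ : ε < 1 / K !) :
    ((K : ℝ) + 1) / (4 * log (K + 1)) ≤
      (∑' n : ℕ, ((n : ℝ) + 1) * min ((1 / ((n + 1)! : ℝ)) ^ 2) (ε ^ 2)) /
        (ε ^ 2 * log (1 / ε)) := by
  have hε0 : 0 < ε := (by positivity : (0 : ℝ) < 1 / (K + 1)!).trans_le hε₁
  have hε1 : ε < 1 := hε₂.trans_le (div_le_one_of_le₀ (by exact_mod_cast K.factorial_pos)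
    (by positivity))
  have hlogε : 0 < log (1 / ε) := log_pos (one_lt_one_div hε0 hε1)
  have hKR : (1 : ℝ) ≤ K := by exact_mod_cast hK
  have hlogK : 0 < log ((K : ℝ) + 1) := log_pos (by linarith)
  have hlog : log (1 / ε) ≤ ((K : ℝ) + 1) * log ((K : ℝ) + 1) := by
    exact_mod_cast log_one_div_le_mul_log hε₁
  calc ((K : ℝ) + 1) / (4 * log (K + 1)) ≤ K * (K + 1) / 2 / ((K + 1) * log (K + 1)) := by
        rw [div_le_div_iff₀ (by positivity) (by positivity)]
        nlinarith [mul_pos (by positivity : (0 : ℝ) < K + 1) hlogK]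
    _ = K * (K + 1) / 2 * ε ^ 2 / (ε ^ 2 * ((K + 1) * log (K + 1))) := by field_simp
    _ ≤ _ := div_le_div₀ (tsum_nonneg fun n => by positivity)
        (mul_succ_div_two_mul_sq_le_tsum hε0.le hε₂.le) (by positivity)
        (mul_le_mul_of_nonneg_left hlog (sq_nonneg ε))

theorem exists_apply_succ_le_lt_apply {α : Type*} [LinearOrder α] {a : ℕ → α} {x : α}
    (h₀ : x < a 0) (h : ∃ m, a m ≤ x) : ∃ n, a (n + 1) ≤ x ∧ x < a n := by
  by_contra! hcon
  obtain ⟨m, hm⟩ := h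
  induction m with
  | zero => exact h₀.not_ge hm
  | succ m ih => exact ih (hcon m hm)

theorem tendsto_nhdsGT_zero_atTop_of_le_on_Ico {a b : ℕ → ℝ} {g : ℝ → ℝ} (ha : Antitone a)
    (ha₀ : Tendsto a atTop (nhds 0)) (ha_pos : ∀ n, 0 < a n) (hb : Tendsto b atTop atTop)
    (hg : ∀ᶠ n in atTop, ∀ ε, a (n + 1) ≤ ε → ε < a n → b n ≤ g ε) :
    Tendsto g (nhdsWithin 0 (Set.Ioi 0)) atTop := by
  refine tendsto_atTop.2 fun C => ?_
  obtain ⟨M, hM⟩ := eventually_atTop.1 ((hb.eventually_ge_atTop C).and hg)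
  filter_upwards [Ioo_mem_nhdsGT (ha_pos M)] with ε ⟨hε0, hεM⟩
  obtain ⟨n, hn₁, hn₂⟩ := exists_apply_succ_le_lt_apply (hεM.trans_le (ha M.zero_le))
    (ha₀.eventually_le_const hε0).exists
  have hMn : M ≤ n := by
    by_contra! hnM
    exact (hεM.trans_le (ha hnM)).not_ge hn₁
  exact (hM n hMn).1.trans ((hM n hMn).2 ε hn₁ hn₂)

theorem rho_tendsto_atTop_for_weighted_factorial_measure
    (P : Measure ℝ)
    (hP : P = Measure.sum fun n : ℕ => (n + 1) • Measure.dirac ((1 : ℝ) / (n + 1).factorial))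
    (ρ : ℝ → ℝ)
    (hρ : ∀ ε : ℝ, ρ ε = (∫⁻ u, ENNReal.ofReal (min (u ^ 2) (ε ^ 2)) ∂P).toReal /
      (ε ^ 2 * Real.log (1 / ε))) :
    Tendsto ρ (nhdsWithin 0 (Set.Ioi 0)) atTop := by
  subst hP
  refine tendsto_nhdsGT_zero_atTop_of_le_on_Ico (a := fun n => 1 / (n ! : ℝ))
    (b := fun K => ((K : ℝ) + 1) / (4 * log (K + 1))) ?_ ?_ (fun n => by positivity) ?_ ?_
  · exact fun m n hmn => one_div_le_one_div_of_le (by positivity)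
      (by exact_mod_cast Nat.factorial_le hmn)
  · simpa only [one_div, Function.comp_def] using
      tendsto_inv_atTop_zero.comp (tendsto_natCast_atTop_atTop.comp factorial_tendsto_atTop)
  · refine ((tendsto_div_log_atTop.comp
      (tendsto_atTop_add_const_right _ 1 tendsto_natCast_atTop_atTop)).atTop_div_const
        four_pos).congr fun K => ?_
    simp only [Function.comp_apply, div_div, mul_comm]
  · filter_upwards [eventually_ge_atTop 1] with K hK ε hε₁ hε₂
    rw [hρ, toReal_lintegral_min_sq_weighted_factorial]
    exact succ_div_four_mul_log_le hK (by exact_mod_cast hε₁) hε₂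
end

section
/- Let Π = Σ_{n≥1} δ_{1/n!} on ℝ. Then Π(ℝ) = +∞, but ρ(ε) := [ε² ln(1/ε)]^{−1} ∫_ℝ (u² ∧ ε²) Π(du) → 0 as ε → 0+. -/
open MeasureTheory Filter Topology

/-! Write `a n = 1 / (n + 1)!`. The sequence at least halves at each step, so once `a K ≤ ε` the
terms past `K` contribute at most `2 ε²`, and `∫ (u² ∧ ε²) dΠ ≤ (K + 2) ε²`. Since
`(m + 2) ^ j ≤ (m + 1 + j)!`, such a `K` exists below `m + 1 + ln (1/ε) / ln (m + 2)` for every `m`,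
whence `ρ ε ≤ (m + 3) / ln (1/ε) + 1 / ln (m + 2)`; let `ε → 0⁺`, then `m → ∞`. -/

lemma le_div_two_pow_of_two_mul_succ_le {a : ℕ → ℝ} (ha : ∀ n, 2 * a (n + 1) ≤ a n) (K i : ℕ) :
    a (K + i) ≤ a K / 2 ^ i := by
  induction i with
  | zero => simp
  | succ i ih =>
    rw [pow_succ, ← div_div, le_div_iff₀ two_pos, ← add_assoc, mul_comm]
    exact (ha _).trans ih

lemma tsum_ofReal_min_sq_le_of_two_mul_succ_le {a : ℕ → ℝ} (ha0 : ∀ n, 0 ≤ a n)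
    (ha : ∀ n, 2 * a (n + 1) ≤ a n) {ε : ℝ} {K : ℕ} (hK : a K ≤ ε) :
    ∑' n, ENNReal.ofReal (min (a n ^ 2) (ε ^ 2)) ≤ (K + 2) * ENNReal.ofReal (ε ^ 2) := by
  set t := fun n => ENNReal.ofReal (min (a n ^ 2) (ε ^ 2))
  have head : ∑ n ∈ Finset.range K, t n ≤ K * ENNReal.ofReal (ε ^ 2) := by
    calc ∑ n ∈ Finset.range K, t n ≤ ∑ _n ∈ Finset.range K, ENNReal.ofReal (ε ^ 2) :=
          Finset.sum_le_sum fun n _ => ENNReal.ofReal_le_ofReal (min_le_right _ _)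
      _ = K * ENNReal.ofReal (ε ^ 2) := by simp
  have tail_term (i : ℕ) : min (a (i + K) ^ 2) (ε ^ 2) ≤ ε ^ 2 * (1 / 2) ^ i := by
    have h2i : (1 : ℝ) ≤ 2 ^ i := one_le_pow₀ one_le_two
    calc min (a (i + K) ^ 2) (ε ^ 2) ≤ (ε / 2 ^ i) ^ 2 := by
          rw [add_comm]
          exact (min_le_left _ _).trans <| pow_le_pow_left₀ (ha0 _) (
            (le_div_two_pow_of_two_mul_succ_le ha K i).trans (by gcongr)) 2
      _ = ε ^ 2 / (2 ^ i) ^ 2 := div_pow _ _ _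
      _ ≤ ε ^ 2 / 2 ^ i := by gcongr; nlinarith
      _ = ε ^ 2 * (1 / 2) ^ i := by rw [one_div_pow, mul_one_div]
  have tail : ∑' i, t (i + K) ≤ ENNReal.ofReal (ε ^ 2) * 2 := by
    calc ∑' i, t (i + K) ≤ ∑' i : ℕ, ENNReal.ofReal (ε ^ 2 * (1 / 2) ^ i) :=
          ENNReal.tsum_le_tsum fun i => ENNReal.ofReal_le_ofReal (tail_term i)
      _ = ENNReal.ofReal (∑' i : ℕ, ε ^ 2 * (1 / 2) ^ i) :=
          (ENNReal.ofReal_tsum_of_nonneg (fun i => by positivity)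
            ((summable_geometric_two).mul_left _)).symm
      _ = ENNReal.ofReal (ε ^ 2) * 2 := by
          rw [tsum_mul_left, tsum_geometric_two, ENNReal.ofReal_mul (by positivity)]
          norm_num
  calc ∑' n, t n = ∑ n ∈ Finset.range K, t n + ∑' i, t (i + K) :=
        (ENNReal.summable.sum_add_tsum_nat_add').symm
    _ ≤ K * ENNReal.ofReal (ε ^ 2) + ENNReal.ofReal (ε ^ 2) * 2 := add_le_add head tail
    _ = (K + 2) * ENNReal.ofReal (ε ^ 2) := by ring

lemma two_mul_one_div_factorial_succ_le (n : ℕ) :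
    2 * ((1 : ℝ) / (n + 1 + 1).factorial) ≤ 1 / (n + 1).factorial := by
  rw [mul_one_div, div_le_div_iff₀ (by positivity) (by positivity), Nat.factorial_succ (n + 1)]
  push_cast
  nlinarith [(n + 1).factorial_pos]

lemma exists_exp_le_factorial_succ (m : ℕ) {L : ℝ} (hL : 0 ≤ L) :
    ∃ K : ℕ, Real.exp L ≤ (K + 1).factorial ∧ (K : ℝ) < m + 1 + L / Real.log (m + 2) := by
  have hlog : 0 < Real.log (m + 2) := Real.log_pos (by linarith [m.cast_nonneg (α := ℝ)])
  set j := ⌈L / Real.log (m + 2)⌉₊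
  refine ⟨m + j, ?_, ?_⟩
  · have hpow : (m + 2) ^ j ≤ (m + j + 1).factorial :=
      calc (m + 2) ^ j ≤ (m + 1).factorial * (m + 1 + 1) ^ j :=
            Nat.le_mul_of_pos_left _ (Nat.factorial_pos _)
        _ ≤ (m + 1 + j).factorial := Nat.factorial_mul_pow_le_factorial
        _ = (m + j + 1).factorial := by rw [add_right_comm]
    calc Real.exp L ≤ Real.exp (j * Real.log (m + 2)) :=
          Real.exp_le_exp.2 ((div_le_iff₀ hlog).1 (Nat.le_ceil _))
      _ = ((m + 2) ^ j : ℕ) := by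
          rw [Real.exp_nat_mul, Real.exp_log (by positivity)]; push_cast; ring
      _ ≤ (m + j + 1).factorial := by exact_mod_cast hpow
  · have := Nat.ceil_lt_add_one (div_nonneg hL hlog.le)
    push_cast
    linarith

lemma tsum_min_sq_one_div_factorial_div_le (m : ℕ) {ε : ℝ} (hε0 : 0 < ε) (hε1 : ε < 1) :
    (∑' n : ℕ, ENNReal.ofReal (min (((1 : ℝ) / (n + 1).factorial) ^ 2) (ε ^ 2))).toReal
      / (ε ^ 2 * Real.log (1 / ε)) ≤ (m + 3) / Real.log (1 / ε) + 1 / Real.log (m + 2) := by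
  set L := Real.log (1 / ε)
  have hL : 0 < L := Real.log_pos (one_lt_one_div hε0 hε1)
  have hlog : 0 < Real.log (m + 2) := Real.log_pos (by linarith [m.cast_nonneg (α := ℝ)])
  obtain ⟨K, hfac, hKlt⟩ := exists_exp_le_factorial_succ m hL.le
  have hK : (1 : ℝ) / (K + 1).factorial ≤ ε := by
    rw [Real.exp_log (by positivity), div_le_iff₀ hε0] at hfac
    rw [div_le_iff₀ (by positivity)]
    linarith
  have hsum := tsum_ofReal_min_sq_le_of_two_mul_succ_le (a := fun n => 1 / (n + 1).factorial)
    (fun n => by positivity)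
    two_mul_one_div_factorial_succ_le hK
  have hreal := ENNReal.toReal_mono (by finiteness) hsum
  rw [ENNReal.toReal_mul, ENNReal.toReal_ofReal (by positivity),
    ENNReal.toReal_add (by simp) (by simp)] at hreal
  calc _ ≤ (K + 2) * ε ^ 2 / (ε ^ 2 * L) := by gcongr; simpa using hreal
    _ = (K + 2) / L := by field_simp
    _ ≤ (m + 3 + L / Real.log (m + 2)) / L := div_le_div_of_nonneg_right (by linarith) hL.le
    _ = (m + 3) / L + 1 / Real.log (m + 2) := by field_simp

theorem rho_tendsto_zero_for_factorial_measure
    (P : Measure ℝ)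
    (hP : P = Measure.sum fun n : ℕ => Measure.dirac ((1 : ℝ) / (n + 1).factorial))
    (ρ : ℝ → ℝ)
    (hρ : ∀ ε : ℝ, ρ ε = (∫⁻ u, ENNReal.ofReal (min (u ^ 2) (ε ^ 2)) ∂P).toReal /
      (ε ^ 2 * Real.log (1 / ε))) :
    P Set.univ = ⊤ ∧ Tendsto ρ (nhdsWithin 0 (Set.Ioi 0)) (nhds 0) := by
  have hS (ε : ℝ) : ∫⁻ u, ENNReal.ofReal (min (u ^ 2) (ε ^ 2)) ∂P =
      ∑' n : ℕ, ENNReal.ofReal (min (((1 : ℝ) / (n + 1).factorial) ^ 2) (ε ^ 2)) := by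
    simp only [hP, lintegral_sum_measure, lintegral_dirac]
  refine ⟨by simp [hP], ?_⟩
  have hL : Tendsto (fun ε : ℝ => Real.log (1 / ε)) (𝓝[>] 0) atTop := by
    simpa only [one_div, Function.comp_def] using Real.tendsto_log_atTop.comp tendsto_inv_nhdsGT_zero
  have hunit : ∀ᶠ ε in 𝓝[>] (0 : ℝ), ε ∈ Set.Ioo 0 1 := Ioo_mem_nhdsGT one_pos
  refine tendsto_order.2 ⟨fun a ha => ?_, fun δ hδ => ?_⟩
  · filter_upwards [hunit] with ε ⟨hε0, hε1⟩
    rw [hρ]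
    exact ha.trans_le (div_nonneg ENNReal.toReal_nonneg
      (mul_nonneg (by positivity) (Real.log_nonneg (one_le_one_div hε0 hε1.le))))
  · obtain ⟨m, hm⟩ : ∃ m : ℕ, 1 / Real.log (m + 2) < δ / 2 :=
      ((tendsto_const_nhds.div_atTop (Real.tendsto_log_atTop.comp
        (tendsto_atTop_add_const_right _ 2 tendsto_natCast_atTop_atTop))).eventually
        (gt_mem_nhds (half_pos hδ))).exists
    have hsmall := (tendsto_const_nhds (x := (m + 3 : ℝ)).div_atTop hL).eventually
      (gt_mem_nhds (half_pos hδ))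
    filter_upwards [hunit, hsmall] with ε ⟨hε0, hε1⟩ hε
    rw [hρ, hS]
    linarith [tsum_min_sq_one_div_factorial_div_le m hε0 hε1]
end

section
/- Let Π = Σ_{n≥1} n δ_{1/n!} on ℝ and t > 0. Define ψ(z) = t Σ_{n≥1} n (e^{iz/n!} − 1 − iz/n!) (the Lévy exponent of the corresponding compensated compound Poisson process at time t). Then |exp(ψ(2π N!))| → 1 as N → ∞; in particular exp(ψ(z)) does not tend to 0 as z → ∞. -/
/-!
Only the real part of `ψ` matters, since `‖exp ψ‖ = exp (Re ψ)`; the compensator `-i z / n!`,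
which does not vanish at `z = 2π N!`, is purely imaginary. At `z = 2π N!` the real part
`(n + 1) (cos (z / (n + 1)!) - 1)` of the `n`-th summand vanishes for `n < N`, because then
`(n + 1)! ∣ N!`; for `n = N + k`, `|cos x - 1| ≤ x² / 2` and `N! (N + 1)^(k + 1) ≤ (N + k + 1)!`
bound it by `2π² (N + 1)^-(k + 1)`. Hence `|Re ψ(2π N!)| ≤ 2π² |t| / N → 0`.
-/

open Filter Complex

open scoped Nat Real Topology

lemma norm_exp_I_mul_ofReal_sub_one_sub_le (x : ℝ) :
    ‖cexp (I * x) - 1 - I * x‖ ≤ 2 * |x| :=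
  calc ‖cexp (I * x) - 1 - I * x‖ ≤ ‖cexp (I * x) - 1‖ + ‖I * x‖ := norm_sub_le _ _
    _ ≤ |x| + |x| := by
        gcongr
        · exact Real.norm_exp_I_mul_ofReal_sub_one_le
        · simp
    _ = 2 * |x| := by ring

lemma re_exp_I_mul_ofReal_sub_one_sub (x : ℝ) :
    (cexp (I * x) - 1 - I * x).re = Real.cos x - 1 := by
  rw [mul_comm]
  simp [exp_ofReal_mul_I_re]

lemma abs_cos_sub_one_le (x : ℝ) : |Real.cos x - 1| ≤ x ^ 2 / 2 := by
  rw [abs_sub_comm, abs_of_nonneg (sub_nonneg.2 (Real.cos_le_one x))]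
  linarith [Real.one_sub_sq_div_two_le_cos (x := x)]

lemma cos_two_pi_mul_div_eq_one {a b : ℕ} (h : b ∣ a) : Real.cos (2 * π * a / b) = 1 := by
  obtain ⟨k, rfl⟩ := h
  rcases eq_or_ne b 0 with rfl | hb
  · simp
  · rw [show 2 * π * ↑(b * k) / b = k * (2 * π) by push_cast; field_simp]
    exact Real.cos_nat_mul_two_pi k

lemma factorial_div_factorial_add_le (m k : ℕ) :
    (m ! : ℝ) / (m + k)! ≤ ((m : ℝ) + 1)⁻¹ ^ k := by
  rw [inv_pow, div_le_iff₀ (by positivity), ← div_eq_inv_mul, le_div_iff₀ (by positivity)]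
  exact_mod_cast Nat.factorial_mul_pow_le_factorial

lemma succ_mul_sq_factorial_div_factorial_succ_le {m n : ℕ} (h : m ≤ n) :
    ((n : ℝ) + 1) * ((m ! : ℝ) / (n + 1)!) ^ 2 ≤ (m ! : ℝ) / (n + 1)! := by
  have hfac : ((n + 1)! : ℝ) = ((n : ℝ) + 1) * n ! := by push_cast [Nat.factorial_succ]; ring
  have hle : (m ! : ℝ) / n ! ≤ 1 :=
    div_le_one_of_le₀ (by exact_mod_cast Nat.factorial_le h) (by positivity)
  calc ((n : ℝ) + 1) * ((m ! : ℝ) / (n + 1)!) ^ 2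
      = (m ! : ℝ) / n ! * ((m ! : ℝ) / (n + 1)!) := by rw [hfac]; field_simp
    _ ≤ (m ! : ℝ) / (n + 1)! := mul_le_of_le_one_left (by positivity) hle

lemma hasSum_inv_add_one_pow_succ {x : ℝ} (hx : 0 < x) :
    HasSum (fun k : ℕ ↦ (x + 1)⁻¹ ^ (k + 1)) x⁻¹ := by
  have h := (hasSum_geometric_of_lt_one (r := (x + 1)⁻¹) (by positivity)
    (inv_lt_one_of_one_lt₀ (by linarith))).mul_left (x + 1)⁻¹
  rw [show (x + 1)⁻¹ * (1 - (x + 1)⁻¹)⁻¹ = x⁻¹ by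
    field_simp
    simp [hx.ne']] at h
  simpa only [← pow_succ'] using h

/-- The `n`-th summand of `ψ / t`: the atom of mass `n + 1` at `1 / (n + 1)!`. -/
noncomputable def levySummand (z : ℝ) (n : ℕ) : ℂ :=
  ((n : ℂ) + 1) * (cexp (I * z / ((n + 1)! : ℝ)) - 1 - I * z / ((n + 1)! : ℝ))

noncomputable def cosSummand (z : ℝ) (n : ℕ) : ℝ :=
  ((n : ℝ) + 1) * (Real.cos (z / (n + 1)!) - 1)

lemma levySummand_eq (z : ℝ) (n : ℕ) :
    levySummand z n = ((n : ℝ) + 1 : ℝ) *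
      (cexp (I * ↑(z / (n + 1)!)) - 1 - I * ↑(z / (n + 1)!)) := by
  simp only [levySummand, ofReal_div, mul_div_assoc]
  push_cast
  ring

lemma summable_levySummand (z : ℝ) : Summable (levySummand z) := by
  refine .of_norm_bounded ((Real.summable_pow_div_factorial 1).mul_left (2 * |z|)) fun n ↦ ?_
  have hfac : ((n + 1)! : ℝ) = ((n : ℝ) + 1) * n ! := by push_cast [Nat.factorial_succ]; ring
  calc ‖levySummand z n‖ ≤ ((n : ℝ) + 1) * (2 * |z / (n + 1)!|) := by
        rw [levySummand_eq, norm_mul, norm_real, Real.norm_of_nonneg (by positivity)]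
        gcongr
        exact norm_exp_I_mul_ofReal_sub_one_sub_le _
    _ = 2 * |z| * (1 ^ n / n !) := by
        rw [abs_div, Nat.abs_cast, hfac, one_pow]; field_simp

lemma re_levySummand (z : ℝ) (n : ℕ) : (levySummand z n).re = cosSummand z n := by
  rw [levySummand_eq, re_ofReal_mul, re_exp_I_mul_ofReal_sub_one_sub, cosSummand]

lemma summable_cosSummand (z : ℝ) : Summable (cosSummand z) := by
  simpa only [re_levySummand] using (hasSum_re (summable_levySummand z).hasSum).summable

lemma norm_exp_mul_tsum_levySummand (t z : ℝ) :
    ‖cexp (t * ∑' n, levySummand z n)‖ = Real.exp (t * ∑' n, cosSummand z n) := by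
  rw [norm_exp, re_ofReal_mul, re_tsum (summable_levySummand z)]
  simp only [re_levySummand]

lemma cosSummand_two_pi_mul_factorial_of_lt {N n : ℕ} (h : n < N) :
    cosSummand (2 * π * N !) n = 0 := by
  rw [cosSummand, cos_two_pi_mul_div_eq_one (Nat.factorial_dvd_factorial h), sub_self, mul_zero]

lemma abs_cosSummand_two_pi_mul_factorial_le (N k : ℕ) :
    |cosSummand (2 * π * N !) (k + N)| ≤ 2 * π ^ 2 * ((N : ℝ) + 1)⁻¹ ^ (k + 1) := by
  have hratio := factorial_div_factorial_add_le N (k + 1)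
  rw [← add_assoc, add_comm N k] at hratio
  calc |cosSummand (2 * π * N !) (k + N)|
      = (((k + N : ℕ) : ℝ) + 1) * |Real.cos (2 * π * N ! / (k + N + 1)!) - 1| := by
        rw [cosSummand, abs_mul, abs_of_nonneg (by positivity)]
    _ ≤ (((k + N : ℕ) : ℝ) + 1) * ((2 * π * N ! / (k + N + 1)!) ^ 2 / 2) := by
        gcongr; exact abs_cos_sub_one_le _
    _ = 2 * π ^ 2 * ((((k + N : ℕ) : ℝ) + 1) * ((N ! : ℝ) / (k + N + 1)!) ^ 2) := by ring
    _ ≤ 2 * π ^ 2 * ((N ! : ℝ) / (k + N + 1)!) := by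
        gcongr; exact succ_mul_sq_factorial_div_factorial_succ_le (Nat.le_add_left N k)
    _ ≤ 2 * π ^ 2 * ((N : ℝ) + 1)⁻¹ ^ (k + 1) := by gcongr

lemma abs_tsum_cosSummand_two_pi_mul_factorial_le {N : ℕ} (hN : 0 < N) :
    |∑' n, cosSummand (2 * π * N !) n| ≤ 2 * π ^ 2 / N := by
  rw [← (summable_cosSummand _).sum_add_tsum_nat_add N,
    Finset.sum_eq_zero fun n hn ↦ cosSummand_two_pi_mul_factorial_of_lt (Finset.mem_range.1 hn),
    zero_add, div_eq_mul_inv]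
  exact tsum_of_norm_bounded (f := fun k ↦ cosSummand _ (k + N))
    ((hasSum_inv_add_one_pow_succ (Nat.cast_pos.2 hN)).mul_left _)
    (abs_cosSummand_two_pi_mul_factorial_le N)

lemma tendsto_tsum_cosSummand_two_pi_mul_factorial :
    Tendsto (fun N : ℕ ↦ ∑' n, cosSummand (2 * π * N !) n) atTop (𝓝 0) := by
  have hbound : Tendsto (fun N : ℕ ↦ 2 * π ^ 2 / (N : ℝ)) atTop (𝓝 0) :=
    tendsto_const_div_atTop_nhds_zero_nat _
  refine squeeze_zero_norm' ?_ hbound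
  filter_upwards [eventually_gt_atTop 0] with N hN
  exact abs_tsum_cosSummand_two_pi_mul_factorial_le hN

theorem char_fun_not_vanishing_at_infinity_general (t : ℝ)
    (ψ : ℝ → ℂ)
    (hψ : ∀ z : ℝ, ψ z = t * ∑' n : ℕ, ((n : ℂ) + 1) *
      (Complex.exp (Complex.I * z / ((n + 1).factorial : ℝ)) - 1 -
        Complex.I * z / ((n + 1).factorial : ℝ))) :
    Tendsto (fun N : ℕ => ‖Complex.exp (ψ (2 * Real.pi * N.factorial))‖)
      atTop (nhds 1) ∧
    ¬ Tendsto (fun z : ℝ => Complex.exp (ψ z)) atTop (nhds 0) := by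
  have hnorm : ∀ z, ‖cexp (ψ z)‖ = Real.exp (t * ∑' n, cosSummand z n) := fun z ↦ by
    rw [hψ z]; exact norm_exp_mul_tsum_levySummand t z
  have hone : Tendsto (fun N : ℕ ↦ ‖cexp (ψ (2 * π * N !))‖) atTop (𝓝 1) := by
    simp_rw [hnorm]
    have hre := tendsto_tsum_cosSummand_two_pi_mul_factorial.const_mul t
    rw [mul_zero] at hre
    simpa using hre.rexp
  refine ⟨hone, fun hzero ↦ ?_⟩
  have hz : Tendsto (fun N : ℕ ↦ 2 * π * N !) atTop atTop :=
    (tendsto_natCast_atTop_atTop.comp factorial_tendsto_atTop).const_mul_atTop (by positivity)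
  have hnorm_zero := (hzero.comp hz).norm
  rw [norm_zero] at hnorm_zero
  exact one_ne_zero (tendsto_nhds_unique hone hnorm_zero)

theorem char_fun_not_vanishing_at_infinity (t : ℝ) (ht : 0 < t)
    (ψ : ℝ → ℂ)
    (hψ : ∀ z : ℝ, ψ z = t * ∑' n : ℕ, ((n : ℂ) + 1) *
      (Complex.exp (Complex.I * z / ((n + 1).factorial : ℝ)) - 1 -
        Complex.I * z / ((n + 1).factorial : ℝ))) :
    Tendsto (fun N : ℕ => ‖Complex.exp (ψ (2 * Real.pi * N.factorial))‖)
      atTop (nhds 1) ∧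
    ¬ Tendsto (fun z : ℝ => Complex.exp (ψ z)) atTop (nhds 0) :=
  char_fun_not_vanishing_at_infinity_general t ψ hψ
end

section
/- Let Π be a Lévy measure on ℝ with Π(|u| > 1) = 0, let A ≠ 0, t > 0, β = e^{−|A|t}, and let φ(z) = exp(∫₀ᵗ ∫_ℝ [cos(e^{(t−s)A} u z) − 1] Π(du) ds) be the modulus of the characteristic function of X(t) = ∫₀ᵗ∫ e^{(t−s)A} u ν̃(ds,du). Then there exists a constant C₃ > 0 (depending on A, t) such that |φ(z)| ≤ (β/|z|)^{C₃ ρ(β/|z|)} for all z ≠ 0, where ρ(ε) = [ε² ln(1/ε)]^{−1} ∫_ℝ (u² ∧ ε²) Π(du). -/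
/-!
Write `β = exp (-|A| t)`. For a single jump size `a`, the time integral
`∫₀ᵗ (1 - cos (e^{(t-s)A} a)) ds` is at least a constant times `min ((a / β)², 1)`.
For `|a| ≤ β` every phase `e^{(t-s)A} a` lies in `[-1, 1]`, where `1 - cos x ≥ (2 / π²) x²`.
For `|a| ≥ β` the substitution `v = e^{(t-s)A} |a|` turns it into
`|A|⁻¹ ∫_p^{e^{|A|t} p} (1 - cos v) / v dv` with `p ≥ β²`, and this is bounded below
uniformly in `p` because `x - |sin x| ≥ κ x` away from `0`.
Integrating against `Π` (Fubini; a Lévy measure is s-finite) gives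
`log φ(z) ≤ -C ∫ (u² ∧ ε²) Π(du) / ε²` with `ε = β / |z|`, which is the claim.
-/

open Real MeasureTheory

lemma sin_sub_sin_le_two_mul_abs_sin (p q : ℝ) : sin q - sin p ≤ 2 * |sin ((q - p) / 2)| := by
  rw [sin_sub_sin]
  calc 2 * sin ((q - p) / 2) * cos ((q + p) / 2)
      ≤ |2 * sin ((q - p) / 2) * cos ((q + p) / 2)| := le_abs_self _
    _ ≤ 2 * |sin ((q - p) / 2)| := by
      rw [abs_mul, abs_mul, abs_two]
      exact mul_le_of_le_one_right (by positivity) (abs_cos_le_one _)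

lemma exists_pos_mul_le_sub_abs_sin {x₀ : ℝ} (hx₀ : 0 < x₀) :
    ∃ κ > 0, ∀ x ≥ x₀, κ * x ≤ x - |sin x| := by
  set m := min x₀ 1
  have hm : 0 < m := lt_min hx₀ one_pos
  have hδ : 0 < m - sin m := sub_pos.2 (sin_lt hm)
  refine ⟨min (m - sin m) 1 / 2, by positivity, fun x hx => ?_⟩
  have hmx : m ≤ x := (min_le_left _ _).trans hx
  -- `sin` is 1-Lipschitz, so `x - |sin x|` stays above its value `m - sin m` at `m ≤ 1 < π`
  have hlip : m - sin m ≤ x - |sin x| := by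
    have hsin_m : 0 ≤ sin m :=
      sin_nonneg_of_nonneg_of_le_pi hm.le ((min_le_right _ _).trans (by linarith [pi_gt_three]))
    have h1 := abs_sub_abs_le_abs_sub (sin x) (sin m)
    have h2 := abs_sin_sub_sin_le x m
    rw [abs_of_nonneg hsin_m] at h1
    rw [abs_of_nonneg (sub_nonneg.2 hmx)] at h2
    linarith
  have hκ₁ := min_le_left (m - sin m) 1
  have hκ₂ := min_le_right (m - sin m) 1
  rcases le_total x 2 with hx2 | hx2
  · nlinarith
  · nlinarith [abs_sin_le_one x]

lemma integral_one_sub_cos (p q : ℝ) :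
    ∫ v in p..q, (1 - cos v) = (q - p) - (sin q - sin p) := by
  rw [intervalIntegral.integral_sub intervalIntegrable_const
    (continuous_cos.intervalIntegrable _ _), integral_one, integral_cos]

lemma sub_sub_sin_sub_sin_div_le_integral {p q : ℝ} (hp : 0 < p) (hpq : p ≤ q) :
    ((q - p) - (sin q - sin p)) / q ≤ ∫ v in p..q, (1 - cos v) / v := by
  rw [← integral_one_sub_cos, ← intervalIntegral.integral_div]
  refine intervalIntegral.integral_mono_on hpq
    ((by fun_prop : Continuous fun v => (1 - cos v) / q).intervalIntegrable _ _)
    (ContinuousOn.intervalIntegrable ?_) fun v hv => ?_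
  · refine (by fun_prop : Continuous fun v => 1 - cos v).continuousOn.div continuousOn_id ?_
    intro v hv
    rw [Set.uIcc_of_le hpq] at hv
    exact (hp.trans_le hv.1).ne'
  · exact div_le_div_of_nonneg_left (sub_nonneg.2 (cos_le_one v)) (hp.trans_le hv.1) hv.2

lemma exists_pos_le_integral_one_sub_cos_div {R p₀ : ℝ} (hR : 1 < R) (hp₀ : 0 < p₀) :
    ∃ c > 0, ∀ p ≥ p₀, c ≤ ∫ v in p..R * p, (1 - cos v) / v := by
  have hR₀ : 0 < R - 1 := sub_pos.2 hR
  obtain ⟨κ, hκ, hsin⟩ :=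
    exists_pos_mul_le_sub_abs_sin (x₀ := (R - 1) * p₀ / 2) (by positivity)
  refine ⟨κ * (R - 1) / R, by positivity, fun p hp => ?_⟩
  have hp0 : 0 < p := hp₀.trans_le hp
  have hx := hsin ((R - 1) * p / 2) (by gcongr)
  have hsub := sin_sub_sin_le_two_mul_abs_sin p (R * p)
  rw [show (R * p - p) / 2 = (R - 1) * p / 2 by ring] at hsub
  calc κ * (R - 1) / R = 2 * (κ * ((R - 1) * p / 2)) / (R * p) := by field_simp
    _ ≤ ((R * p - p) - (sin (R * p) - sin p)) / (R * p) := by gcongr; linarith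
    _ ≤ _ := sub_sub_sin_sub_sin_div_le_integral hp0 (by nlinarith)

lemma integral_comp_exp_mul_mul {g : ℝ → ℝ} (hg : Continuous g) {A p : ℝ} (hA : A ≠ 0)
    (hp : 0 < p) (t : ℝ) :
    ∫ s in 0..t, g (exp (s * A) * p) = A⁻¹ * ∫ v in p..exp (t * A) * p, g v / v := by
  have hsubst : ∫ w in 0..t * A, g (exp w * p) = ∫ v in p..exp (t * A) * p, g v / v := by
    have h := intervalIntegral.integral_comp_mul_deriv' (f := fun w => exp w * p)
      (f' := fun w => exp w * p) (g := fun v => g v / v) (a := 0) (b := t * A)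
      (fun w _ => (hasDerivAt_exp w).mul_const p) (by fun_prop)
      (hg.continuousOn.div continuousOn_id (by rintro _ ⟨w, _, rfl⟩; positivity))
    have hne : ∀ w, exp w * p ≠ 0 := fun w => (mul_pos (exp_pos w) hp).ne'
    simpa [Function.comp_def, div_mul_cancel₀ _ (hne _)] using h
  rw [intervalIntegral.integral_comp_mul_right (fun w => g (exp w * p)) hA, zero_mul, hsubst,
    smul_eq_mul]

lemma exp_mul_mem_Icc {x t : ℝ} (A : ℝ) (hx : |x| ≤ t) :
    exp (x * A) ∈ Set.Icc (exp (-|A| * t)) (exp (|A| * t)) := by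
  have h : |x * A| ≤ |A| * t := by
    rw [abs_mul, mul_comm]
    exact mul_le_mul_of_nonneg_left hx (abs_nonneg A)
  obtain ⟨h₁, h₂⟩ := abs_le.1 h
  exact ⟨exp_le_exp.2 (by linarith), exp_le_exp.2 h₂⟩

lemma exists_pos_le_integral_one_sub_cos_exp {A t : ℝ} (hA : A ≠ 0) (ht : 0 < t) :
    ∃ C > 0, ∀ a, exp (-|A| * t) ≤ |a| →
      C ≤ ∫ s in 0..t, (1 - cos (exp ((t - s) * A) * a)) := by
  set β := exp (-|A| * t)
  have hAt : 0 < |A| * t := mul_pos (abs_pos.2 hA) ht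
  have hβ₁ : β ≤ 1 := exp_le_one_iff.2 (by linarith)
  have hRβ : exp (|A| * t) * β = 1 := by rw [← exp_add]; simp
  obtain ⟨c, hc, hint⟩ := exists_pos_le_integral_one_sub_cos_div (R := exp (|A| * t))
    (one_lt_exp_iff.2 hAt) (by positivity : 0 < β * β)
  refine ⟨c / |A|, by positivity, fun a ha => ?_⟩
  have ha₀ : 0 < |a| := (exp_pos _).trans_le ha
  have hsubst : ∫ s in 0..t, (1 - cos (exp ((t - s) * A) * a)) =
      A⁻¹ * ∫ v in |a|..exp (t * A) * |a|, (1 - cos v) / v := by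
    rw [intervalIntegral.integral_comp_sub_left (fun s => 1 - cos (exp (s * A) * a)), sub_self,
      sub_zero, ← integral_comp_exp_mul_mul (by fun_prop) hA ha₀]
    congr 1 with s
    rw [← cos_abs (exp (s * A) * a), abs_mul, abs_of_pos (exp_pos _)]
  rw [hsubst]
  rcases hA.lt_or_gt with hA₀ | hA₀
  · -- for `A < 0` the range of `v` is `[p, exp (|A| t) p]` with `p = β |a|`
    have hexp : exp (t * A) = β := by simp only [β, abs_of_neg hA₀]; ring_nf
    have hp := hint (β * |a|) (mul_le_mul_of_nonneg_left ha (exp_pos _).le)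
    rw [← mul_assoc, hRβ, one_mul] at hp
    calc c / |A| ≤ (∫ v in β * |a|..|a|, (1 - cos v) / v) / -A := by
          rw [abs_of_neg hA₀]; exact div_le_div_of_nonneg_right hp (by linarith)
      _ = _ := by rw [hexp, intervalIntegral.integral_symm]; ring
  · have hexp : exp (t * A) = exp (|A| * t) := by rw [abs_of_pos hA₀, mul_comm]
    have hp := hint |a| ((mul_le_of_le_one_left (exp_pos _).le hβ₁).trans ha)
    calc c / |A| ≤ (∫ v in |a|..exp (|A| * t) * |a|, (1 - cos v) / v) / |A| :=
          div_le_div_of_nonneg_right hp (abs_nonneg A)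
      _ = _ := by rw [hexp, abs_of_pos hA₀, div_eq_inv_mul]

lemma mul_sq_le_integral_one_sub_cos_exp {A t a : ℝ} (ht : 0 ≤ t)
    (ha : |a| ≤ exp (-|A| * t)) :
    t * (2 / π ^ 2 * exp (-|A| * t) ^ 2 * a ^ 2) ≤
      ∫ s in 0..t, (1 - cos (exp ((t - s) * A) * a)) := by
  have hRβ : exp (|A| * t) * exp (-|A| * t) = 1 := by rw [← exp_add]; simp
  calc t * (2 / π ^ 2 * exp (-|A| * t) ^ 2 * a ^ 2)
      = ∫ _ in 0..t, 2 / π ^ 2 * exp (-|A| * t) ^ 2 * a ^ 2 := by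
        rw [intervalIntegral.integral_const, sub_zero, smul_eq_mul]
    _ ≤ _ := intervalIntegral.integral_mono_on ht intervalIntegrable_const
      ((by fun_prop : Continuous fun s => 1 - cos (exp ((t - s) * A) * a)).intervalIntegrable _ _)
      fun s hs => ?_
  obtain ⟨hlo, hhi⟩ := exp_mul_mem_Icc (t := t) A (x := t - s)
    (abs_le.2 ⟨by linarith [hs.2], by linarith [hs.1]⟩)
  have hca : |exp ((t - s) * A) * a| ≤ 1 := by
    rw [abs_mul, abs_of_pos (exp_pos _), ← hRβ]
    exact mul_le_mul hhi ha (abs_nonneg a) (exp_pos _).le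
  have hcos := cos_le_one_sub_mul_cos_sq (hca.trans (by linarith [pi_gt_three]))
  have hsq : exp (-|A| * t) ^ 2 * a ^ 2 ≤ (exp ((t - s) * A) * a) ^ 2 := by
    rw [mul_pow]
    exact mul_le_mul_of_nonneg_right (pow_le_pow_left₀ (exp_pos _).le hlo 2) (sq_nonneg a)
  have hK : 0 ≤ 2 / π ^ 2 := by positivity
  nlinarith

lemma exists_pos_mul_min_le_integral_one_sub_cos_exp {A t : ℝ} (hA : A ≠ 0) (ht : 0 < t) :
    ∃ C > 0, ∀ a, C * min ((a / exp (-|A| * t)) ^ 2) 1 ≤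
      ∫ s in 0..t, (1 - cos (exp ((t - s) * A) * a)) := by
  obtain ⟨C₂, hC₂, hlarge⟩ := exists_pos_le_integral_one_sub_cos_exp hA ht
  set β := exp (-|A| * t)
  have hβ : 0 < β := exp_pos _
  refine ⟨min (t * (2 / π ^ 2) * β ^ 4) C₂, by positivity, fun a => ?_⟩
  rcases le_total |a| β with ha | ha
  · calc min (t * (2 / π ^ 2) * β ^ 4) C₂ * min ((a / β) ^ 2) 1
        ≤ t * (2 / π ^ 2) * β ^ 4 * (a / β) ^ 2 :=
          mul_le_mul (min_le_left _ _) (min_le_left _ _) (by positivity) (by positivity)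
      _ = t * (2 / π ^ 2 * β ^ 2 * a ^ 2) := by field_simp
      _ ≤ _ := mul_sq_le_integral_one_sub_cos_exp ht.le ha
  · calc min (t * (2 / π ^ 2) * β ^ 4) C₂ * min ((a / β) ^ 2) 1 ≤ C₂ * 1 :=
          mul_le_mul (min_le_right _ _) (min_le_right _ _) (by positivity) hC₂.le
      _ ≤ _ := by rw [mul_one]; exact hlarge a ha

lemma sFinite_restrict_setOf_ne_zero {α : Type*} [MeasurableSpace α] {μ : Measure α}
    {f : α → ENNReal} (hf : Measurable f) (hfi : ∫⁻ x, f x ∂μ ≠ ⊤) :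
    SFinite (μ.restrict {x | f x ≠ 0}) := by
  have : IsFiniteMeasure ((μ.restrict {x | f x ≠ 0}).withDensity f) :=
    isFiniteMeasure_withDensity (ne_top_of_le_ne_top hfi (setLIntegral_le_lintegral _ _))
  exact sFinite_of_absolutelyContinuous (withDensity_absolutelyContinuous' hf.aemeasurable
    (ae_restrict_mem (hf (measurableSet_singleton 0).compl)))

lemma sFinite_of_lintegral_min_sq_one_ne_top {P : Measure ℝ}
    (hP : ∫⁻ u, ENNReal.ofReal (min (u ^ 2) 1) ∂P ≠ ⊤) : SFinite P := by
  have hsupp : {u : ℝ | ENNReal.ofReal (min (u ^ 2) 1) ≠ 0} = {0}ᶜ := by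
    ext u
    simp
  have := sFinite_restrict_setOf_ne_zero (by fun_prop) hP
  rw [hsupp] at this
  rw [← Measure.restrict_add_restrict_compl (μ := P) (measurableSet_singleton 0),
    Measure.restrict_singleton]
  infer_instance

lemma abs_cos_mul_sub_one_le (c x : ℝ) : |cos (c * x) - 1| ≤ max (c ^ 2) 2 * min (x ^ 2) 1 := by
  rw [abs_sub_comm, abs_of_nonneg (sub_nonneg.2 (cos_le_one _))]
  rcases le_total (x ^ 2) 1 with hx | hx
  · rw [min_eq_left hx]
    calc 1 - cos (c * x) ≤ c ^ 2 * x ^ 2 / 2 := by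
          linarith [one_sub_sq_div_two_le_cos (x := c * x), mul_pow c x 2]
      _ ≤ max (c ^ 2) 2 * x ^ 2 := by nlinarith [le_max_left (c ^ 2) 2, sq_nonneg x, sq_nonneg c]
  · rw [min_eq_right hx, mul_one]
    linarith [neg_one_le_cos (c * x), le_max_right (c ^ 2) 2]

lemma integral_integral_cos_sub_one_le {P : Measure ℝ} [SFinite P]
    (hP : Integrable (fun u => min (u ^ 2) 1) P) {A t : ℝ} (ht : 0 ≤ t) {w : ℝ → ℝ}
    (hw : ∀ a, 0 ≤ w a) (hwle : ∀ a, w a ≤ ∫ s in 0..t, (1 - cos (exp ((t - s) * A) * a)))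
    (z : ℝ) :
    ∫ s in Set.Ioc 0 t, ∫ u, (cos (exp ((t - s) * A) * u * z) - 1) ∂P ≤
      -∫ u, w (u * z) ∂P := by
  have hF : Integrable (Function.uncurry fun s u => cos (exp ((t - s) * A) * u * z) - 1)
      ((volume.restrict (Set.Ioc 0 t)).prod P) := by
    refine Integrable.mono' ((Continuous.integrableOn_Ioc
      (by fun_prop : Continuous fun s => max ((exp ((t - s) * A) * z) ^ 2) 2)).mul_prod hP)
      (by fun_prop : Continuous _).aestronglyMeasurable (ae_of_all _ fun x => ?_)
    rw [Real.norm_eq_abs, Function.uncurry_apply_pair, mul_right_comm]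
    exact abs_cos_mul_sub_one_le _ _
  rw [integral_integral_swap hF, le_neg, ← integral_neg]
  refine integral_mono_of_nonneg (ae_of_all _ fun u => hw _) hF.integral_prod_right.neg
    (ae_of_all _ fun u => ?_)
  simp only [← intervalIntegral.integral_of_le ht, ← intervalIntegral.integral_neg, neg_sub,
    mul_assoc]
  exact hwle (u * z)

lemma integral_min_div_sq_one (P : Measure ℝ) {ε : ℝ} (hε : ε ≠ 0) :
    ∫ u, min ((u / ε) ^ 2) 1 ∂P =
      (∫⁻ u, ENNReal.ofReal (min (u ^ 2) (ε ^ 2)) ∂P).toReal / ε ^ 2 := by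
  have hpt : ∀ u, min ((u / ε) ^ 2) 1 = min (u ^ 2) (ε ^ 2) / ε ^ 2 := fun u => by
    rw [← min_div_div_right (sq_nonneg ε), div_pow, div_self (pow_ne_zero 2 hε)]
  simp_rw [hpt, integral_div]
  rw [integral_eq_lintegral_of_nonneg_ae (ae_of_all _ fun u => by positivity)
    (by fun_prop : Continuous fun u : ℝ => min (u ^ 2) (ε ^ 2)).aestronglyMeasurable]

lemma exp_neg_div_sq_le_rpow {ε M : ℝ} (hε : 0 < ε) (hM : 0 ≤ M) :
    exp (-(M / ε ^ 2)) ≤ ε ^ (M / (ε ^ 2 * log (1 / ε))) := by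
  rw [rpow_def_of_pos hε, one_div, log_inv]
  rcases eq_or_ne (log ε) 0 with h | h
  · -- junk case `ε = 1`: the exponent divides by `log 1 = 0`
    rw [h]
    simpa using div_nonneg hM (sq_nonneg ε)
  · apply le_of_eq
    congr 1
    field_simp

theorem char_fun_bound_one_dimensional_general (P : Measure ℝ)
    (hLevy : ∫⁻ u, ENNReal.ofReal (min (u ^ 2) 1) ∂P < ⊤)
    (A t : ℝ) (hA : A ≠ 0) (ht : 0 < t) (β : ℝ) (hβ : β = Real.exp (-|A| * t))
    (ρ : ℝ → ℝ)
    (hρ : ∀ ε : ℝ, ρ ε = (∫⁻ u, ENNReal.ofReal (min (u ^ 2) (ε ^ 2)) ∂P).toReal /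
      (ε ^ 2 * Real.log (1 / ε)))
    (φ : ℝ → ℝ)
    (hφ : ∀ z : ℝ, φ z = Real.exp (∫ s in Set.Ioc (0:ℝ) t,
      (∫ u, (Real.cos (Real.exp ((t - s) * A) * u * z) - 1) ∂P))) :
    ∃ C₃ : ℝ, 0 < C₃ ∧ ∀ z : ℝ, z ≠ 0 →
      φ z ≤ (β / |z|) ^ (C₃ * ρ (β / |z|)) := by
  have := sFinite_of_lintegral_min_sq_one_ne_top hLevy.ne
  have hP : Integrable (fun u => min (u ^ 2) 1) P :=
    ⟨(by fun_prop : Continuous fun u : ℝ => min (u ^ 2) 1).aestronglyMeasurable,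
      (hasFiniteIntegral_iff_ofReal (ae_of_all _ fun u => by positivity)).2 hLevy⟩
  obtain ⟨C, hC, hflow⟩ := exists_pos_mul_min_le_integral_one_sub_cos_exp hA ht
  refine ⟨C, hC, fun z hz => ?_⟩
  have hε : 0 < β / |z| := div_pos (hβ ▸ exp_pos _) (abs_pos.2 hz)
  have hrescale : ∀ u, C * min ((u * z / β) ^ 2) 1 = C * min ((u / (β / |z|)) ^ 2) 1 :=
    fun u => by rw [div_div_eq_mul_div, div_pow, div_pow, mul_pow, mul_pow, sq_abs]
  have hbound := integral_integral_cos_sub_one_le hP ht.le (fun a => by positivity) hflow z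
  simp_rw [← hβ, hrescale, integral_const_mul, integral_min_div_sq_one P hε.ne',
    ← mul_div_assoc] at hbound
  rw [hφ, hρ, ← mul_div_assoc]
  exact (exp_le_exp.2 hbound).trans (exp_neg_div_sq_le_rpow hε (by positivity))

theorem char_fun_bound_one_dimensional (P : Measure ℝ)
    (hLevy : ∫⁻ u, ENNReal.ofReal (min (u ^ 2) 1) ∂P < ⊤)
    (hsupp : P {u : ℝ | 1 < |u|} = 0)
    (A t : ℝ) (hA : A ≠ 0) (ht : 0 < t) (β : ℝ) (hβ : β = Real.exp (-|A| * t))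
    (ρ : ℝ → ℝ)
    (hρ : ∀ ε : ℝ, ρ ε = (∫⁻ u, ENNReal.ofReal (min (u ^ 2) (ε ^ 2)) ∂P).toReal /
      (ε ^ 2 * Real.log (1 / ε)))
    (φ : ℝ → ℝ)
    (hφ : ∀ z : ℝ, φ z = Real.exp (∫ s in Set.Ioc (0:ℝ) t,
      (∫ u, (Real.cos (Real.exp ((t - s) * A) * u * z) - 1) ∂P))) :
    ∃ C₃ : ℝ, 0 < C₃ ∧ ∀ z : ℝ, z ≠ 0 →
      φ z ≤ (β / |z|) ^ (C₃ * ρ (β / |z|)) :=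
  char_fun_bound_one_dimensional_general P hLevy A t hA ht β hβ ρ hρ φ hφ
end

section
/- Let ρ : (0,1) → ℝ₊ and suppose there is a sequence εₙ → 0+ with ρ(εₙ) ≤ C < ∞. Let t ∈ (0, 1/(2C)) and suppose a real random variable X satisfies, for each n, P(X ∈ [Mₙ − √εₙ, Mₙ + √εₙ]) ≥ εₙ^{t ρ(εₙ)} − K [εₙ ln(1/εₙ)] ρ(εₙ) for some reals Mₙ and a constant K. Then P(X ∈ [xₙ, yₙ])/(yₙ − xₙ) → +∞ where xₙ = Mₙ − √εₙ, yₙ = Mₙ + √εₙ; consequently X has no bounded density. -/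
/-!
The window has width `2√εₙ`, while its mass is at least `εₙ^{tC} - |K| C εₙ log(1/εₙ)`
because `ρ(εₙ) ≤ C` and `εₙ < 1`. As `tC < 1/2`, the first term beats `√εₙ` and the second
is `o(√εₙ)`, so the mass-to-width ratio blows up; a density bounded by `M'` caps it at `M'`.
-/

open MeasureTheory Filter Set Real Topology

lemma tendsto_rpow_div_sqrt_nhdsGT_zero {a : ℝ} (ha : a < 1 / 2) :
    Tendsto (fun x : ℝ => x ^ a / √x) (𝓝[>] 0) atTop := by
  refine ((tendsto_rpow_atTop (sub_pos.2 ha)).comp tendsto_inv_nhdsGT_zero).congr' ?_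
  filter_upwards [self_mem_nhdsWithin] with x (hx : 0 < x)
  rw [Function.comp_apply, inv_rpow hx.le, ← rpow_neg hx.le, neg_sub, rpow_sub hx,
    sqrt_eq_rpow]

lemma tendsto_mul_log_inv_div_sqrt_nhdsGT_zero :
    Tendsto (fun x : ℝ => x * log (1 / x) / √x) (𝓝[>] 0) (𝓝 0) := by
  have h := (tendsto_log_mul_rpow_nhdsGT_zero (r := 1 / 2) one_half_pos).neg
  rw [neg_zero] at h
  refine h.congr' ?_
  filter_upwards [self_mem_nhdsWithin] with x (hx : 0 < x)
  rw [one_div x, log_inv, ← sqrt_eq_rpow]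
  field_simp [(sqrt_pos.2 hx).ne']
  rw [sq_sqrt hx.le]

lemma tendsto_rpow_sub_mul_log_div_sqrt_nhdsGT_zero {a : ℝ} (ha : a < 1 / 2) (c : ℝ) :
    Tendsto (fun x : ℝ => (x ^ a - c * (x * log (1 / x))) / (2 * √x)) (𝓝[>] 0) atTop := by
  have h := ((tendsto_rpow_div_sqrt_nhdsGT_zero ha).atTop_add
    (tendsto_mul_log_inv_div_sqrt_nhdsGT_zero.const_mul c).neg).atTop_div_const two_pos
  refine h.congr' ?_
  filter_upwards [self_mem_nhdsWithin] with x (hx : 0 < x)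
  field_simp [(sqrt_pos.2 hx).ne']
  ring

lemma rpow_sub_abs_mul_le_rpow_sub_mul {x t r C : ℝ} (K : ℝ) (hx : x ∈ Ioo (0 : ℝ) 1)
    (ht : 0 < t) (hr : 0 ≤ r) (hrC : r ≤ C) :
    x ^ (t * C) - |K| * C * (x * log (1 / x)) ≤ x ^ (t * r) - K * (x * log (1 / x)) * r := by
  have hpow : x ^ (t * C) ≤ x ^ (t * r) :=
    rpow_le_rpow_of_exponent_ge hx.1 hx.2.le (mul_le_mul_of_nonneg_left hrC ht.le)
  have hL : 0 ≤ x * log (1 / x) :=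
    mul_nonneg hx.1.le (log_nonneg ((one_le_div hx.1).2 hx.2.le))
  have hK : K * r ≤ |K| * C :=
    (mul_le_mul_of_nonneg_right (le_abs_self K) hr).trans
      (mul_le_mul_of_nonneg_left hrC (abs_nonneg K))
  nlinarith [mul_le_mul_of_nonneg_right hK hL]

lemma measure_le_mul_of_eq_setLIntegral {α : Type*} [MeasurableSpace α] {μ ν : Measure α}
    {f : α → ENNReal} {c : ENNReal} (hμ : ∀ B, MeasurableSet B → μ B = ∫⁻ u in B, f u ∂ν)
    (hf : ∀ u, f u ≤ c) {B : Set α} (hB : MeasurableSet B) : μ B ≤ c * ν B := by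
  rw [hμ B hB, ← setLIntegral_const]
  exact lintegral_mono hf

lemma toReal_measure_Icc_div_le_of_density_le {μ : Measure ℝ} {p : ℝ → ℝ} {M' : ℝ}
    (hp0 : ∀ u, 0 ≤ p u) (hpM : ∀ u, p u ≤ M')
    (hdens : ∀ B : Set ℝ, MeasurableSet B → μ B = ∫⁻ u in B, ENNReal.ofReal (p u))
    (m : ℝ) {r : ℝ} (hr : 0 < r) :
    (μ (Icc (m - r) (m + r))).toReal / (2 * r) ≤ M' := by
  have hM' : 0 ≤ M' := (hp0 0).trans (hpM 0)
  have hle := measure_le_mul_of_eq_setLIntegral hdens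
    (fun u => ENNReal.ofReal_le_ofReal (hpM u)) (measurableSet_Icc (a := m - r) (b := m + r))
  rw [volume_Icc, show m + r - (m - r) = 2 * r by ring, ← ENNReal.ofReal_mul hM'] at hle
  rw [div_le_iff₀ (by positivity)]
  exact ENNReal.toReal_le_of_le_ofReal (by positivity) hle

lemma not_exists_bounded_density_of_tendsto_atTop {μ : Measure ℝ} {m r : ℕ → ℝ}
    (hr : ∀ n, 0 < r n)
    (h : Tendsto (fun n => (μ (Icc (m n - r n) (m n + r n))).toReal / (2 * r n)) atTop atTop) :
    ¬ ∃ (p : ℝ → ℝ) (M' : ℝ), Measurable p ∧ (∀ u, 0 ≤ p u) ∧ (∀ u, p u ≤ M') ∧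
      ∀ B : Set ℝ, MeasurableSet B → μ B = ∫⁻ u in B, ENNReal.ofReal (p u) := by
  rintro ⟨p, M', -, hp0, hpM, hdens⟩
  obtain ⟨n, hn⟩ := (h.eventually_gt_atTop M').exists
  exact hn.not_ge (toReal_measure_Icc_div_le_of_density_le hp0 hpM hdens (m n) (hr n))

theorem ratio_blowup_no_bounded_density
    (ρ : ℝ → ℝ) (hρpos : ∀ ε ∈ Set.Ioo (0:ℝ) 1, 0 ≤ ρ ε)
    (ε : ℕ → ℝ) (hεmem : ∀ n, ε n ∈ Set.Ioo (0:ℝ) 1)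
    (hεlim : Tendsto ε atTop (nhdsWithin 0 (Set.Ioi 0)))
    (C : ℝ) (hC : ∀ n, ρ (ε n) ≤ C)
    (t : ℝ) (ht : 0 < t) (htC : t * C < 1 / 2)
    (μ : Measure ℝ) [IsProbabilityMeasure μ]
    (M : ℕ → ℝ) (K : ℝ)
    (hlow : ∀ n, ENNReal.ofReal
        ((ε n) ^ (t * ρ (ε n)) - K * (ε n * Real.log (1 / ε n)) * ρ (ε n)) ≤
      μ (Set.Icc (M n - Real.sqrt (ε n)) (M n + Real.sqrt (ε n)))) :
    Tendsto (fun n => (μ (Set.Icc (M n - Real.sqrt (ε n)) (M n + Real.sqrt (ε n)))).toReal /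
        (2 * Real.sqrt (ε n))) atTop atTop ∧
    ¬ ∃ (p : ℝ → ℝ) (M' : ℝ), Measurable p ∧ (∀ u, 0 ≤ p u) ∧ (∀ u, p u ≤ M') ∧
      ∀ B : Set ℝ, MeasurableSet B → μ B = ∫⁻ u in B, ENNReal.ofReal (p u) := by
  have hsqrt : ∀ n, 0 < √(ε n) := fun n => sqrt_pos.2 (hεmem n).1
  have hbound : ∀ n, (ε n ^ (t * C) - |K| * C * (ε n * log (1 / ε n))) / (2 * √(ε n)) ≤
      (μ (Icc (M n - √(ε n)) (M n + √(ε n)))).toReal / (2 * √(ε n)) := fun n => by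
    refine div_le_div_of_nonneg_right ?_ (by linarith [hsqrt n])
    refine (rpow_sub_abs_mul_le_rpow_sub_mul K (hεmem n) ht
      (hρpos _ (hεmem n)) (hC n)).trans ?_
    exact (ENNReal.ofReal_le_iff_le_toReal (measure_ne_top μ _)).1 (hlow n)
  have hratio := tendsto_atTop_mono hbound
    ((tendsto_rpow_sub_mul_log_div_sqrt_nhdsGT_zero htC (|K| * C)).comp hεlim)
  exact ⟨hratio, not_exists_bounded_density_of_tendsto_atTop hsqrt hratio⟩
end
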